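/- Let \(V = \{v_0,\dots,v_d\} \subset \mathbb{S}^{d-1}\) be points in general position whose Voronoi cells on the sphere tile \(\mathbb{S}^{d-1}\). Then each Voronoi cell is a spherical simplex (an intersection of \(d\) hemispheres), and the faces of these cells correspond bijectively to nonempty subsets \(Q \subseteq V\), with the face for \(Q\) being the set of points of the corresponding cell equidistant from all points of \(Q\); moreover the intersection of two such faces is again such a face. -/

import Mathlib

open Metric Set
open scoped RealInnerProductSpace

/-- The spherical Voronoi cell of the vertex `v i`. -/
def vorCell {d : ℕ} (v : Fin (d + 1) → EuclideanSpace ℝ (Fin d)) (i : Fin (d + 1)) :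
    Set (EuclideanSpace ℝ (Fin d)) :=
  {u | ‖u‖ = 1 ∧ ∀ j, ⟪u, v j⟫ ≤ ⟪u, v i⟫}

/-- The face of the spherical Voronoi diagram corresponding to a set `Q` of vertices:
the points of the sphere lying in the cells of all the vertices in `Q` (equivalently,
the points of those cells equidistant from all the points of `Q`). -/
def vorFace {d : ℕ} (v : Fin (d + 1) → EuclideanSpace ℝ (Fin d)) (Q : Finset (Fin (d + 1))) :
    Set (EuclideanSpace ℝ (Fin d)) :=
  {u | ‖u‖ = 1 ∧ ∀ i ∈ Q, ∀ j, ⟪u, v j⟫ ≤ ⟪u, v i⟫}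

/-!
In general position the `d` vectors `v j - v i` (`j ≠ i`) form a basis, so the linear
functionals `⟪·, v j⟫` can be given arbitrary values up to a common constant. Taking the
indicator of a nonempty `Q ≠ univ` yields a point of the face of `Q` strictly closer to the
vertices of `Q` than to the others; hence distinct sets have distinct faces.
-/

theorem AffineBasis.exists_inner_vsub_eq {ι E : Type*} [NormedAddCommGroup E]
    [InnerProductSpace ℝ E] [FiniteDimensional ℝ E] (b : AffineBasis ι ℝ E) (i : ι)
    (c : ι → ℝ) : ∃ u : E, ∀ j, ⟪u, b j -ᵥ b i⟫ = c j - c i := by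
  classical
  let f : E →ₗ[ℝ] ℝ := (b.basisOf i).constr ℝ fun j => c j - c i
  refine ⟨(InnerProductSpace.toDual ℝ E).symm (LinearMap.toContinuousLinearMap f), fun j => ?_⟩
  rw [InnerProductSpace.toDual_symm_apply]
  by_cases hji : j = i
  · subst hji; simp
  · simpa [f] using (b.basisOf i).constr_basis ℝ (fun j => c j - c i) ⟨j, hji⟩

section Voronoi

variable {d : ℕ} (v : Fin (d + 1) → EuclideanSpace ℝ (Fin d))

theorem vorCell_eq_sphere_inter (i : Fin (d + 1)) :
    vorCell v i = sphere 0 1 ∩ ⋂ j ∈ {j | j ≠ i}, {u | ⟪u, v j - v i⟫ ≤ 0} := by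
  ext u
  simp only [vorCell, mem_ofPred_eq, mem_inter_iff, mem_sphere_zero_iff_norm, mem_iInter,
    inner_sub_right, sub_nonpos]
  refine and_congr_right fun _ => ⟨fun h j _ => h j, fun h j => ?_⟩
  rcases eq_or_ne j i with rfl | hj
  · exact le_rfl
  · exact h j hj

theorem vorFace_inter_vorFace (Q Q' : Finset (Fin (d + 1))) :
    vorFace v Q ∩ vorFace v Q' = vorFace v (Q ∪ Q') := by
  ext u
  simp only [vorFace, mem_inter_iff, mem_ofPred_eq, Finset.mem_union, or_imp, forall_and]
  tauto

theorem mem_vorCell_of_mem_vorFace {Q : Finset (Fin (d + 1))} {u : EuclideanSpace ℝ (Fin d)}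
    (hu : u ∈ vorFace v Q) {i : Fin (d + 1)} (hi : i ∈ Q) : u ∈ vorCell v i :=
  ⟨hu.1, hu.2 i hi⟩

theorem inner_eq_of_mem_vorFace {Q : Finset (Fin (d + 1))} {u : EuclideanSpace ℝ (Fin d)}
    (hu : u ∈ vorFace v Q) {i j : Fin (d + 1)} (hi : i ∈ Q) (hj : j ∈ Q) :
    ⟪u, v i⟫ = ⟪u, v j⟫ :=
  le_antisymm (hu.2 j hj i) (hu.2 i hi j)

theorem exists_mem_vorFace_inner_lt (hindep : AffineIndependent ℝ v)
    {Q : Finset (Fin (d + 1))} (hQ : Q.Nonempty) {j : Fin (d + 1)} (hj : j ∉ Q) :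
    ∃ w ∈ vorFace v Q, ∀ i ∈ Q, ⟪w, v j⟫ < ⟪w, v i⟫ := by
  classical
  let b : AffineBasis (Fin (d + 1)) ℝ (EuclideanSpace ℝ (Fin d)) :=
    ⟨v, hindep, hindep.affineSpan_eq_top_iff_card_eq_finrank_add_one.mpr (by simp)⟩
  obtain ⟨u, hu⟩ : ∃ u, ∀ k, ⟪u, v k - v j⟫ = (if k ∈ Q then 1 else 0) - if j ∈ Q then 1 else 0 :=
    b.exists_inner_vsub_eq j _
  have hv : ∀ k, ⟪u, v k⟫ = ⟪u, v j⟫ + if k ∈ Q then 1 else 0 := fun k => by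
    have := hu k
    rw [inner_sub_right, if_neg hj, sub_zero] at this
    linarith
  obtain ⟨i₀, hi₀⟩ := hQ
  have hu0 : u ≠ 0 := by
    rintro rfl
    simpa [hi₀] using hv i₀
  have hpos : 0 < ‖u‖⁻¹ := inv_pos.mpr (norm_pos_iff.mpr hu0)
  have hw : ∀ k, ⟪‖u‖⁻¹ • u, v k⟫ = ‖u‖⁻¹ * ⟪u, v j⟫ + ‖u‖⁻¹ * if k ∈ Q then 1 else 0 := by
    intro k
    rw [real_inner_smul_left, hv k, mul_add]
  refine ⟨‖u‖⁻¹ • u, ⟨norm_smul_inv_norm hu0, fun i hi k => ?_⟩, fun i hi => ?_⟩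
  · rw [hw, hw, if_pos hi]
    split_ifs <;> nlinarith
  · rw [hw, hw, if_pos hi, if_neg hj]
    linarith

theorem subset_of_vorFace_subset (hindep : AffineIndependent ℝ v)
    {Q Q' : Finset (Fin (d + 1))} (hQ : Q.Nonempty) (h : vorFace v Q ⊆ vorFace v Q') :
    Q' ⊆ Q := by
  intro j hj
  by_contra hjQ
  obtain ⟨w, hw, hlt⟩ := exists_mem_vorFace_inner_lt v hindep hQ hjQ
  obtain ⟨i, hi⟩ := hQ
  exact (hlt i hi).not_ge ((h hw).2 j hj i)

end Voronoi

theorem dist_eq_dist_of_inner_eq {E : Type*} [NormedAddCommGroup E] [InnerProductSpace ℝ E]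
    {u x y : E} (hxy : ‖x‖ = ‖y‖) (h : ⟪u, x⟫ = ⟪u, y⟫) : dist u x = dist u y := by
  rw [dist_eq_norm, dist_eq_norm, ← sq_eq_sq₀ (norm_nonneg _) (norm_nonneg _),
    norm_sub_sq_real, norm_sub_sq_real, hxy, h]

theorem voronoi_cells_simplicial_complex_general {d : ℕ}
    (v : Fin (d + 1) → EuclideanSpace ℝ (Fin d))
    (hv : ∀ i, ‖v i‖ = 1) (hindep : AffineIndependent ℝ v) :
    (∀ i, vorCell v i =
        sphere (0 : EuclideanSpace ℝ (Fin d)) 1 ∩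
          ⋂ j ∈ {j | j ≠ i}, {u | ⟪u, v j - v i⟫ ≤ 0}) ∧
    (∀ Q Q' : Finset (Fin (d + 1)), Q.Nonempty → Q'.Nonempty →
      vorFace v Q = vorFace v Q' → Q = Q') ∧
    (∀ Q Q' : Finset (Fin (d + 1)),
      vorFace v Q ∩ vorFace v Q' = vorFace v (Q ∪ Q')) ∧
    (∀ Q : Finset (Fin (d + 1)), ∀ u ∈ vorFace v Q,
      (∀ i ∈ Q, u ∈ vorCell v i) ∧ ∀ i ∈ Q, ∀ j ∈ Q, dist u (v i) = dist u (v j)) := by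
  refine ⟨vorCell_eq_sphere_inter v, fun Q Q' hQ hQ' h => ?_, vorFace_inter_vorFace v,
    fun Q u hu => ⟨fun i hi => mem_vorCell_of_mem_vorFace v hu hi, fun i hi j hj => ?_⟩⟩
  · exact (subset_of_vorFace_subset v hindep hQ' h.ge).antisymm
      (subset_of_vorFace_subset v hindep hQ h.le)
  · exact dist_eq_dist_of_inner_eq ((hv i).trans (hv j).symm)
      (inner_eq_of_mem_vorFace v hu hi hj)

/-- For points `v 0, …, v d ∈ 𝕊^{d-1}` in general position (affinely independent, with the
origin interior to their convex hull), the Voronoi cells are spherical simplices (each is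
the intersection of the sphere with `d` hemispheres), the faces correspond bijectively to
the nonempty subsets `Q` of the vertex set — each face consisting of the points of the
corresponding cells equidistant from all points of `Q` — and the intersection of two faces
is again a face (the faces form a simplicial complex). -/
theorem voronoi_cells_simplicial_complex {d : ℕ} (hd : 1 ≤ d)
    (v : Fin (d + 1) → EuclideanSpace ℝ (Fin d))
    (hv : ∀ i, ‖v i‖ = 1) (hindep : AffineIndependent ℝ v)
    (h0 : (0 : EuclideanSpace ℝ (Fin d)) ∈ interior (convexHull ℝ (Set.range v))) :
    (∀ i, vorCell v i =
        sphere (0 : EuclideanSpace ℝ (Fin d)) 1 ∩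
          ⋂ j ∈ {j | j ≠ i}, {u | ⟪u, v j - v i⟫ ≤ 0}) ∧
    (∀ Q Q' : Finset (Fin (d + 1)), Q.Nonempty → Q'.Nonempty →
      vorFace v Q = vorFace v Q' → Q = Q') ∧
    (∀ Q Q' : Finset (Fin (d + 1)),
      vorFace v Q ∩ vorFace v Q' = vorFace v (Q ∪ Q')) ∧
    (∀ Q : Finset (Fin (d + 1)), ∀ u ∈ vorFace v Q,
      (∀ i ∈ Q, u ∈ vorCell v i) ∧ ∀ i ∈ Q, ∀ j ∈ Q, dist u (v i) = dist u (v j)) :=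
  voronoi_cells_simplicial_complex_general v hv hindep
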